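/- arXiv:2409.13616 — 8 statements merged into one kernel-verified Lean document; each statement's English description precedes it below -/
import Mathlib

section
/- Suppose every agent i ∈ N has a monotone valuation V_i with V_i(∅) = 0, and every item is relevant for at least one agent (A = ⋃_{i∈N} A_i). Then there exists an EF1 orientation: an allocation π of all items with π_i ⊆ A_i for every agent i that is EF1. -/
section Aux

variable {A : Type*} [DecidableEq A]

/-- If removing `a` never strictly decreases the (monotone) value, then erasing `a`
never changes the value. -/
lemma ef1aux_erase (W : Finset A → ℝ) (hm : ∀ S' S : Finset A, S' ⊆ S → W S' ≤ W S)
    (a : A) (h : ¬ ∃ S : Finset A, W (S.erase a) < W S) (S : Finset A) :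
    W (S.erase a) = W S := by
  push_neg at h
  exact le_antisymm (hm _ _ (Finset.erase_subset a S)) (h S)

lemma ef1aux_insert (W : Finset A → ℝ) (hm : ∀ S' S : Finset A, S' ⊆ S → W S' ≤ W S)
    (a : A) (h : ¬ ∃ S : Finset A, W (S.erase a) < W S) (S : Finset A) :
    W (insert a S) = W S := by
  have h1 := ef1aux_erase W hm a h (insert a S)
  rw [Finset.erase_insert_eq_erase] at h1
  rw [← h1, ef1aux_erase W hm a h S]

lemma ef1aux_filter (W : Finset A → ℝ) (P : A → Prop) [DecidablePred P]
    (h : ∀ b, ¬ P b → ∀ S : Finset A, W (S.erase b) = W S) :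
    ∀ S : Finset A, W (S.filter P) = W S := by
  intro S
  induction S using Finset.strongInduction with
  | _ S ih =>
    by_cases hall : ∀ b ∈ S, P b
    · rw [Finset.filter_true_of_mem hall]
    · push_neg at hall
      obtain ⟨b, hbS, hbP⟩ := hall
      have h1 : S.filter P = (S.erase b).filter P := by
        ext c
        simp only [Finset.mem_filter, Finset.mem_erase]
        constructor
        · rintro ⟨hcS, hcP⟩
          exact ⟨⟨fun hcb => hbP (hcb ▸ hcP), hcS⟩, hcP⟩
        · rintro ⟨⟨_, hcS⟩, hcP⟩
          exact ⟨hcS, hcP⟩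
      rw [h1, ih (S.erase b) (Finset.erase_ssubset hbS), h b hbP S]

end Aux

/-- EF1 is preserved when every agent's bundle shrinks to a subset of a (re-indexed)
old bundle while everyone's own value weakly increases. -/
lemma ef1aux_transfer {N A : Type*} [DecidableEq A] (V : N → Finset A → ℝ)
    (hmono : ∀ i : N, ∀ S' S : Finset A, S' ⊆ S → V i S' ≤ V i S)
    (π π' : N → Finset A) (σ : N → N)
    (hEF1 : ∀ i j : N, V i (π i) ≥ V i (π j) ∨
      ∃ b ∈ π j, V i (π i) ≥ V i ((π j).erase b))
    (hsub : ∀ j, π' j ⊆ π (σ j)) (hval : ∀ i, V i (π i) ≤ V i (π' i)) :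
    ∀ i j : N, V i (π' i) ≥ V i (π' j) ∨
      ∃ b ∈ π' j, V i (π' i) ≥ V i ((π' j).erase b) := by
  intro i j
  rcases hEF1 i (σ j) with h | ⟨b, hb, hle⟩
  · left
    calc V i (π' j) ≤ V i (π (σ j)) := hmono i _ _ (hsub j)
    _ ≤ V i (π i) := h
    _ ≤ V i (π' i) := hval i
  · by_cases hbj : b ∈ π' j
    · right
      refine ⟨b, hbj, ?_⟩
      calc V i ((π' j).erase b) ≤ V i ((π (σ j)).erase b) :=
        hmono i _ _ (Finset.erase_subset_erase b (hsub j))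
      _ ≤ V i (π i) := hle
      _ ≤ V i (π' i) := hval i
    · left
      have hss : π' j ⊆ (π (σ j)).erase b := Finset.subset_erase.2 ⟨hsub j, hbj⟩
      calc V i (π' j) ≤ V i ((π (σ j)).erase b) := hmono i _ _ hss
      _ ≤ V i (π i) := hle
      _ ≤ V i (π' i) := hval i

/-- If every agent has a monotone valuation with `V i ∅ = 0` and every
item is relevant for at least one agent, then an EF1 orientation exists: a partition of
all items into bundles such that every agent receives only items relevant to them, and
the allocation is envy-free up to one item. -/
theorem ef1_orientation_exists
    {N A : Type*} [Fintype N] [Fintype A] [DecidableEq A]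
    (V : N → Finset A → ℝ)
    (hmono : ∀ i : N, ∀ S' S : Finset A, S' ⊆ S → V i S' ≤ V i S)
    (hzero : ∀ i : N, V i ∅ = 0)
    (hrel : ∀ a : A, ∃ i : N, ∃ S : Finset A, V i (S.erase a) < V i S) :
    ∃ π : N → Finset A,
      (∀ i j : N, i ≠ j → Disjoint (π i) (π j)) ∧
      (∀ a : A, ∃ i : N, a ∈ π i) ∧
      (∀ i : N, ∀ a ∈ π i, ∃ S : Finset A, V i (S.erase a) < V i S) ∧
      (∀ i j : N, V i (π i) ≥ V i (π j) ∨
        ∃ a ∈ π j, V i (π i) ≥ V i ((π j).erase a)) := by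
  classical
  -- relevance predicate
  set rel : N → A → Prop := fun i a => ∃ S : Finset A, V i (S.erase a) < V i S with hrel_def
  have key_erase : ∀ i a, ¬ rel i a → ∀ S : Finset A, V i (S.erase a) = V i S :=
    fun i a h S => ef1aux_erase (V i) (hmono i) a h S
  have key_insert : ∀ i a, ¬ rel i a → ∀ S : Finset A, V i (insert a S) = V i S :=
    fun i a h S => ef1aux_insert (V i) (hmono i) a h S
  have key_filter : ∀ i (S : Finset A), V i (S.filter (rel i)) = V i S := by
    intro i S
    exact ef1aux_filter (V i) (rel i) (fun b hb S' => key_erase i b hb S') S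
  -- the class of "good" partial allocations
  set Good : (N → Finset A) → Prop := fun π =>
    (∀ i j : N, i ≠ j → Disjoint (π i) (π j)) ∧
    (∀ i : N, ∀ b ∈ π i, rel i b) ∧
    (∀ i j : N, V i (π i) ≥ V i (π j) ∨
      ∃ b ∈ π j, V i (π i) ≥ V i ((π j).erase b)) with hGood_def
  -- the potential function
  set f : (N → Finset A) → (ℝ ×ₗ ℕ) := fun π =>
    toLex (∑ i, V i (π i), (Finset.univ.biUnion π).card) with hf_def
  -- choose a Good allocation maximizing the potential
  have hGempty : Good (fun _ => ∅) := by
    refine ⟨fun i j _ => Finset.disjoint_empty_left _, fun i b hb => absurd hb (by simp),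
      fun i j => Or.inl le_rfl⟩
  obtain ⟨π, hπG, hmax⟩ : ∃ π, Good π ∧ ∀ π', Good π' → f π' ≤ f π := by
    obtain ⟨π, hπ, hπmax⟩ := Finset.exists_max_image (Finset.univ.filter Good) f
      ⟨fun _ => ∅, Finset.mem_filter.2 ⟨Finset.mem_univ _, hGempty⟩⟩
    exact ⟨π, (Finset.mem_filter.1 hπ).2,
      fun π' hπ' => hπmax π' (Finset.mem_filter.2 ⟨Finset.mem_univ _, hπ'⟩)⟩
  obtain ⟨hdisj, hornt, hEF1⟩ := hπG
  -- main claim: π covers every item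
  have hcov : ∀ a : A, ∃ i : N, a ∈ π i := by
    intro a
    by_contra hnc
    push_neg at hnc
    -- `a` is unallocated
    obtain ⟨j0, hj0⟩ : ∃ j0, rel j0 a := hrel a
    by_cases hc : ∃ j, rel j a ∧ ∀ i, rel i a → V i (π j) ≤ V i (π i)
    · -- Case 1: some agent j who finds a relevant is envied by no agent who finds a
      -- relevant.  Give a to j.
      obtain ⟨j, hja, hjun⟩ := hc
      set π' : N → Finset A := Function.update π j (insert a (π j)) with hπ'_def
      have hπ'j : π' j = insert a (π j) := Function.update_self _ _ _
      have hπ'ne : ∀ i, i ≠ j → π' i = π i := fun i hi => Function.update_of_ne hi _ _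
      have hsup : ∀ i, π i ⊆ π' i := by
        intro i
        rcases eq_or_ne i j with h | h
        · subst h; rw [hπ'j]; exact Finset.subset_insert _ _
        · rw [hπ'ne i h]
      have hval : ∀ i, V i (π i) ≤ V i (π' i) := fun i => hmono i _ _ (hsup i)
      have hG' : Good π' := by
        refine ⟨?_, ?_, ?_⟩
        · -- disjointness
          intro i k hik
          rcases eq_or_ne i j with h | h
        -- i = j
          · subst h
            rw [hπ'j, hπ'ne k hik.symm]
            exact Finset.disjoint_insert_left.2 ⟨hnc k, hdisj _ _ hik⟩
          · rcases eq_or_ne k j with h' | h'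
            · subst h'
              rw [hπ'j, hπ'ne i h]
              exact Finset.disjoint_insert_right.2 ⟨hnc i, hdisj _ _ hik⟩
            · rw [hπ'ne i h, hπ'ne k h']
              exact hdisj _ _ hik
        · -- orientation
          intro i b hb
          rcases eq_or_ne i j with h | h
          · subst h
            rw [hπ'j] at hb
            rcases Finset.mem_insert.1 hb with h | h
            · subst h; exact hja
            · exact hornt _ _ h
          · rw [hπ'ne i h] at hb
            exact hornt _ _ hb
        · -- EF1
          intro i k
          rcases eq_or_ne i k with h | hik
          · subst h; exact Or.inl le_rfl
          rcases eq_or_ne k j with h | hkj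
          · -- k = j : the receiver
            subst h
            have hiak : i ≠ k := hik
            right
            by_cases hia : rel i a
            · -- i finds a relevant, hence didn't envy k
              refine ⟨a, by rw [hπ'j]; exact Finset.mem_insert_self _ _, ?_⟩
              rw [hπ'j, Finset.erase_insert (hnc k), hπ'ne i hik]
              exact hjun i hia
            · -- i doesn't find a relevant: a is invisible to i
              rcases hEF1 i k with h | ⟨b, hb, hle⟩
              · refine ⟨a, by rw [hπ'j]; exact Finset.mem_insert_self _ _, ?_⟩
                rw [hπ'j, Finset.erase_insert (hnc k), hπ'ne i hik]
                exact h
              · refine ⟨b, by rw [hπ'j]; exact Finset.mem_insert_of_mem hb, ?_⟩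
                have hab : a ≠ b := fun h => (hnc k) (h ▸ hb)
                rw [hπ'j, Finset.erase_insert_of_ne hab, key_insert i a hia,
                  hπ'ne i hik]
                exact hle
          · -- k ≠ j : bundle unchanged
            rw [hπ'ne k hkj]
            rcases hEF1 i k with h | ⟨b, hb, hle⟩
            · exact Or.inl (le_trans h (hval i))
            · exact Or.inr ⟨b, hb, le_trans hle (hval i)⟩
      -- potential strictly increases
      have hsum : ∑ i, V i (π i) ≤ ∑ i, V i (π' i) :=
        Finset.sum_le_sum (fun i _ => hval i)
      have hcard : (Finset.univ.biUnion π).card < (Finset.univ.biUnion π').card := by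
        apply Finset.card_lt_card
        constructor
        · intro b hb
          obtain ⟨i, _, hbi⟩ := Finset.mem_biUnion.1 hb
          exact Finset.mem_biUnion.2 ⟨i, Finset.mem_univ _, hsup i hbi⟩
        · intro hsubs
          have : a ∈ Finset.univ.biUnion π' :=
            Finset.mem_biUnion.2 ⟨j, Finset.mem_univ _, by
              rw [hπ'j]; exact Finset.mem_insert_self _ _⟩
          obtain ⟨i, _, hai⟩ := Finset.mem_biUnion.1 (hsubs this)
          exact hnc i hai
      have hlt : f π < f π' := by
        rw [hf_def]
        rw [Prod.Lex.lt_iff]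
        rcases lt_or_eq_of_le hsum with h | h
        · exact Or.inl h
        · exact Or.inr ⟨h, hcard⟩
      exact absurd (hmax π' hG') (not_le.2 hlt)
    · -- Case 2: every agent who finds a relevant is envied by such an agent.
      -- There is an envy cycle among them; rotate it.
      push_neg at hc
      have hc2 : ∀ j, rel j a → ∃ i, rel i a ∧ V i (π i) < V i (π j) := by
        intro j hj
        obtain ⟨i, hi1, hi2⟩ := hc j hj
        exact ⟨i, hi1, hi2⟩
      -- the "envier" function
      set e : N → N := fun j => if h : rel j a then (hc2 j h).choose else j with he_def
      have he_spec : ∀ j, rel j a → rel (e j) a ∧ V (e j) (π (e j)) < V (e j) (π j) := by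
        intro j h
        have : e j = (hc2 j h).choose := by rw [he_def]; exact dif_pos h
        rw [this]
        exact (hc2 j h).choose_spec
      -- the orbit of j0 under e stays in the relevant set
      have horb : ∀ t : ℕ, rel (e^[t] j0) a := by
        intro t
        induction t with
        | zero => exact hj0
        | succ t ih =>
          rw [Function.iterate_succ_apply']
          exact (he_spec _ ih).1
      -- find a periodic point
      obtain ⟨m, n, hmn, heq⟩ : ∃ m n : ℕ, m < n ∧ e^[m] j0 = e^[n] j0 := by
        obtain ⟨m, n, hne, heq⟩ :=
          Finite.exists_ne_map_eq_of_infinite (fun t : ℕ => e^[t] j0)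
        rcases hne.lt_or_gt with h | h
        · exact ⟨m, n, h, heq⟩
        · exact ⟨n, m, h, heq.symm⟩
      set x : N := e^[m] j0 with hx_def
      set p : ℕ := n - m with hp_def
      have hp : 0 < p := Nat.sub_pos_of_lt hmn
      have hxp : e^[p] x = x := by
        rw [hx_def, ← Function.iterate_add_apply, hp_def, Nat.sub_add_cancel hmn.le]
        exact heq.symm
      have hper : ∀ k : ℕ, e^[p * k] x = x := by
        intro k
        induction k with
        | zero => simp
        | succ k ih =>
          rw [Nat.mul_succ, Function.iterate_add_apply, hxp, ih]
      have hmod : ∀ q : ℕ, e^[q] x = e^[q % p] x := by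
        intro q
        conv_lhs => rw [← Nat.mod_add_div q p]
        rw [Function.iterate_add_apply, hper]
      -- the cycle
      set O : Finset N := (Finset.range p).image (fun t => e^[t] x) with hO_def
      have hxO : x ∈ O := by
        rw [hO_def]
        exact Finset.mem_image.2 ⟨0, Finset.mem_range.2 hp, rfl⟩
      have hO1 : ∀ y ∈ O, rel y a := by
        intro y hy
        obtain ⟨t, _, rfl⟩ := Finset.mem_image.1 hy
        rw [hx_def, ← Function.iterate_add_apply]
        exact horb _
      have hOp : ∀ y ∈ O, e^[p] y = y := by
        intro y hy
        obtain ⟨t, _, rfl⟩ := Finset.mem_image.1 hy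
        rw [← Function.iterate_add_apply, Nat.add_comm, Function.iterate_add_apply, hxp]
      have hOcl : ∀ y ∈ O, e^[p-1] y ∈ O := by
        intro y hy
        obtain ⟨t, _, rfl⟩ := Finset.mem_image.1 hy
        rw [← Function.iterate_add_apply, hmod]
        exact Finset.mem_image.2 ⟨(p - 1 + t) % p, Finset.mem_range.2 (Nat.mod_lt _ hp), rfl⟩
      have hOinv : ∀ y ∈ O, e (e^[p-1] y) = y := by
        intro y hy
        have h1 := Function.iterate_succ_apply' e (p-1) y
        rw [← h1, Nat.succ_eq_add_one, Nat.sub_add_cancel hp]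
        exact hOp y hy
      -- the rotation σ : each cycle agent takes the bundle of the agent it envies
      set σ : N → N := fun y => if y ∈ O then e^[p-1] y else y with hσ_def
      have hσO : ∀ y ∈ O, σ y = e^[p-1] y := fun y hy => by rw [hσ_def]; exact if_pos hy
      have hσnO : ∀ y, y ∉ O → σ y = y := fun y hy => by rw [hσ_def]; exact if_neg hy
      have hσmem : ∀ y ∈ O, σ y ∈ O := fun y hy => (hσO y hy) ▸ hOcl y hy
      have hσinv : ∀ y ∈ O, e (σ y) = y := fun y hy => (hσO y hy) ▸ hOinv y hy
      have henvy : ∀ y ∈ O, V y (π y) < V y (π (σ y)) := by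
        intro y hy
        have h1 := he_spec (σ y) (hO1 _ (hσmem y hy))
        rw [hσinv y hy] at h1
        exact h1.2
      have hσinj : Function.Injective σ := by
        intro y z h
        by_cases hy : y ∈ O <;> by_cases hz : z ∈ O
        · rw [← hσinv y hy, ← hσinv z hz, h]
        · exact absurd ((hσnO z hz) ▸ h ▸ hσmem y hy) hz
        · exact absurd ((hσnO y hy) ▸ h.symm ▸ hσmem z hz) hy
        · rw [← hσnO y hy, ← hσnO z hz, h]
      -- the new allocation
      set π' : N → Finset A := fun y => if y ∈ O then (π (σ y)).filter (rel y) else π y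
        with hπ'_def
      have hπ'O : ∀ y ∈ O, π' y = (π (σ y)).filter (rel y) :=
        fun y hy => by rw [hπ'_def]; exact if_pos hy
      have hπ'nO : ∀ y, y ∉ O → π' y = π y := fun y hy => by rw [hπ'_def]; exact if_neg hy
      have hsub : ∀ y, π' y ⊆ π (σ y) := by
        intro y
        by_cases hy : y ∈ O
        · rw [hπ'O y hy]; exact Finset.filter_subset _ _
        · rw [hπ'nO y hy, hσnO y hy]
      have hval : ∀ y, V y (π y) ≤ V y (π' y) := by
        intro y
        by_cases hy : y ∈ O
        · rw [hπ'O y hy, key_filter]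
          exact (henvy y hy).le
        · rw [hπ'nO y hy]
      have hvalx : V x (π x) < V x (π' x) := by
        rw [hπ'O x hxO, key_filter]
        exact henvy x hxO
      have hG' : Good π' := by
        refine ⟨?_, ?_, ?_⟩
        · intro i k hik
          exact Finset.disjoint_of_subset_left (hsub i) (Finset.disjoint_of_subset_right
            (hsub k) (hdisj _ _ (fun h => hik (hσinj h))))
        · intro i b hb
          by_cases hi : i ∈ O
          · rw [hπ'O i hi] at hb
            exact (Finset.mem_filter.1 hb).2
          · rw [hπ'nO i hi] at hb
            exact hornt _ _ hb
        · exact ef1aux_transfer V hmono π π' σ hEF1 hsub hval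
      have hsum : ∑ i, V i (π i) < ∑ i, V i (π' i) :=
        Finset.sum_lt_sum (fun i _ => hval i) ⟨x, Finset.mem_univ _, hvalx⟩
      have hlt : f π < f π' := by
        rw [hf_def, Prod.Lex.lt_iff]
        exact Or.inl hsum
      exact absurd (hmax π' hG') (not_le.2 hlt)
  exact ⟨π, hdisj, hcov, hornt, hEF1⟩
end

section
/- Suppose all valuations are monotone with V_i(∅) = 0. Let π be a partial allocation that is EF1 and satisfies π_k ⊆ A_k for every agent k, let a be an item not allocated by π, and let i ∈ N_a be an agent such that no agent j ∈ N_a \ {i} envies i (i.e. V_j(π_i) ≤ V_j(π_j) for every j ∈ N_a with j ≠ i). Then the partial allocation π' obtained from π by setting π'_i = π_i ∪ {a} and π'_k = π_k for k ≠ i is again EF1 and satisfies π'_k ⊆ A_k for every agent k. -/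
/-- Suppose all valuations are monotone with `V i ∅ = 0`. If `π` is an
EF1 partial allocation in which every agent only holds items relevant to them, `a` is an
unallocated item, and `i` is an agent for whom `a` is relevant such that no agent `j ≠ i`
for whom `a` is relevant envies `i`, then giving `a` to `i` yields again a partial
allocation that is EF1 and in which every agent only holds items relevant to them. -/
theorem add_item_to_source_preserves_EF1
    {N A : Type*} [DecidableEq N] [DecidableEq A]
    (V : N → Finset A → ℝ)
    (hmono : ∀ i : N, ∀ S' S : Finset A, S' ⊆ S → V i S' ≤ V i S)
    (hzero : ∀ i : N, V i ∅ = 0)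
    (π : N → Finset A)
    (hdisj : ∀ i j : N, i ≠ j → Disjoint (π i) (π j))
    (hor : ∀ k : N, ∀ b ∈ π k, ∃ S : Finset A, V k (S.erase b) < V k S)
    (hEF1 : ∀ i j : N, V i (π i) ≥ V i (π j) ∨
      ∃ b ∈ π j, V i (π i) ≥ V i ((π j).erase b))
    (a : A) (ha : ∀ k : N, a ∉ π k)
    (i : N) (hia : ∃ S : Finset A, V i (S.erase a) < V i S)
    (hsource : ∀ j : N, (∃ S : Finset A, V j (S.erase a) < V j S) → j ≠ i →
      V j (π i) ≤ V j (π j)) :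
    (∀ k l : N, k ≠ l →
      Disjoint (Function.update π i (insert a (π i)) k)
        (Function.update π i (insert a (π i)) l)) ∧
    (∀ k : N, ∀ b ∈ Function.update π i (insert a (π i)) k,
      ∃ S : Finset A, V k (S.erase b) < V k S) ∧
    (∀ k l : N,
      V k (Function.update π i (insert a (π i)) k) ≥
        V k (Function.update π i (insert a (π i)) l) ∨
      ∃ b ∈ Function.update π i (insert a (π i)) l,
        V k (Function.update π i (insert a (π i)) k) ≥
          V k ((Function.update π i (insert a (π i)) l).erase b)) := by
  classical
  have hπ'i : Function.update π i (insert a (π i)) i = insert a (π i) := by simp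
  have hπ'ne : ∀ k, k ≠ i → Function.update π i (insert a (π i)) k = π k :=
    fun k hk => Function.update_of_ne hk _ _
  refine ⟨?_, ?_, ?_⟩
  · intro k l hkl
    by_cases hk : k = i
    · subst k
      rw [hπ'i, hπ'ne l (Ne.symm hkl)]
      exact Finset.disjoint_insert_left.mpr ⟨ha l, hdisj i l hkl⟩
    · by_cases hl : l = i
      · subst l
        rw [hπ'i, hπ'ne k hk]
        exact Finset.disjoint_insert_right.mpr ⟨ha k, hdisj k i hkl⟩
      · rw [hπ'ne k hk, hπ'ne l hl]; exact hdisj k l hkl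
  · intro k b hb
    by_cases hk : k = i
    · subst k
      rw [hπ'i] at hb
      rcases Finset.mem_insert.mp hb with rfl | hb
      · exact hia
      · exact hor i b hb
    · rw [hπ'ne k hk] at hb; exact hor k b hb
  · intro k l
    by_cases hl : l = i
    · subst l
      rw [hπ'i]
      by_cases hk : k = i
      · subst k
        right
        refine ⟨a, Finset.mem_insert_self _ _, ?_⟩
        rw [hπ'i, Finset.erase_insert (ha i)]
        exact hmono i _ _ (Finset.subset_insert a (π i))
      · rw [hπ'ne k hk]
        by_cases hrel : ∃ S : Finset A, V k (S.erase a) < V k S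
        · right
          refine ⟨a, Finset.mem_insert_self _ _, ?_⟩
          rw [Finset.erase_insert (ha i)]
          exact hsource k hrel hk
        · push_neg at hrel
          have hins : ∀ S : Finset A, a ∉ S → V k (insert a S) = V k S := by
            intro S haS
            have h1 := hrel (insert a S)
            rw [Finset.erase_insert haS] at h1
            exact le_antisymm h1 (hmono k S _ (Finset.subset_insert a S))
          rcases hEF1 k i with h | ⟨b, hb, hbv⟩
          · left; rw [hins _ (ha i)]; exact h
          · right
            refine ⟨b, Finset.mem_insert_of_mem hb, ?_⟩
            have hab : a ≠ b := fun h => ha i (h ▸ hb)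
            rw [Finset.erase_insert_of_ne hab,
              hins _ (fun h => ha i (Finset.erase_subset _ _ h))]
            exact hbv
    · rw [hπ'ne l hl]
      by_cases hk : k = i
      · subst k
        rw [hπ'i]
        have hmi : V i (π i) ≤ V i (insert a (π i)) :=
          hmono i _ _ (Finset.subset_insert a (π i))
        rcases hEF1 i l with h | ⟨b, hb, hbv⟩
        · left; exact le_trans h hmi
        · right; exact ⟨b, hb, le_trans hbv hmi⟩
      · rw [hπ'ne k hk]; exact hEF1 k l
end

section
/- Suppose all valuations are monotone with V_i(∅) = 0. Let π be a partial allocation that is EF1 and satisfies π_k ⊆ A_k for every agent k. Let i_1, …, i_ℓ (ℓ ≥ 2) be distinct agents forming a directed cycle in the envy graph of π, i.e. V_{i_t}(π_{i_t}) < V_{i_t}(π_{i_{t+1}}) for every t (indices taken modulo ℓ). Define π' by π'_{i_t} = π_{i_{t+1}} ∩ A_{i_t} for each t (indices modulo ℓ) and π'_k = π_k for every agent k not on the cycle. Then π' is a partial allocation satisfying π'_k ⊆ A_k for every k, V_k(π'_k) ≥ V_k(π_k) for every agent k with strict inequality V_{i_t}(π'_{i_t}) > V_{i_t}(π_{i_t})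 for each cycle agent i_t, and π' is EF1. -/
open scoped Classical

/-- Suppose all valuations are monotone with `V i ∅ = 0`, `π` is an EF1
partial allocation in which every agent only holds items relevant to them, and
`c 0, c 1, …, c (ℓ-1)` (with `ℓ ≥ 2`, indices modulo `ℓ`) are distinct agents forming a
directed cycle in the envy graph of `π`. If `π'` is obtained from `π` by giving each
cycle agent `c t` the relevant part of the bundle of `c (t+1)` and leaving all other
bundles unchanged, then `π'` is again a partial allocation in which every agent only
holds relevant items, every agent is at least as happy (cycle agents strictly happier),
and `π'` is EF1. -/
theorem envy_cycle_elimination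
    {N A : Type*} [DecidableEq A]
    (V : N → Finset A → ℝ)
    (hmono : ∀ i : N, ∀ S' S : Finset A, S' ⊆ S → V i S' ≤ V i S)
    (hzero : ∀ i : N, V i ∅ = 0)
    (π : N → Finset A)
    (hdisj : ∀ i j : N, i ≠ j → Disjoint (π i) (π j))
    (hor : ∀ k : N, ∀ b ∈ π k, ∃ S : Finset A, V k (S.erase b) < V k S)
    (hEF1 : ∀ i j : N, V i (π i) ≥ V i (π j) ∨
      ∃ b ∈ π j, V i (π i) ≥ V i ((π j).erase b))
    (ℓ : ℕ) (hℓ : 2 ≤ ℓ) (c : ZMod ℓ → N) (hcinj : Function.Injective c)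
    (hcycle : ∀ t : ZMod ℓ, V (c t) (π (c t)) < V (c t) (π (c (t + 1))))
    (π' : N → Finset A)
    (hπ'cycle : ∀ t : ZMod ℓ,
      π' (c t) = (π (c (t + 1))).filter
        (fun a => ∃ S : Finset A, V (c t) (S.erase a) < V (c t) S))
    (hπ'other : ∀ k : N, (∀ t : ZMod ℓ, k ≠ c t) → π' k = π k) :
    (∀ i j : N, i ≠ j → Disjoint (π' i) (π' j)) ∧
    (∀ k : N, ∀ b ∈ π' k, ∃ S : Finset A, V k (S.erase b) < V k S) ∧
    (∀ k : N, V k (π' k) ≥ V k (π k)) ∧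
    (∀ t : ZMod ℓ, V (c t) (π' (c t)) > V (c t) (π (c t))) ∧
    (∀ i j : N, V i (π' i) ≥ V i (π' j) ∨
      ∃ b ∈ π' j, V i (π' i) ≥ V i ((π' j).erase b)) := by
  classical
  -- relevance predicate
  have herase : ∀ (i : N) (a : A), ¬ (∃ S : Finset A, V i (S.erase a) < V i S) →
      ∀ S : Finset A, V i (S.erase a) = V i S := by
    intro i a ha S
    refine le_antisymm (hmono i _ _ (Finset.erase_subset _ _)) ?_
    by_contra h
    exact ha ⟨S, lt_of_not_ge h⟩
  have hsdiff : ∀ (i : N) (T S : Finset A),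
      (∀ a ∈ T, ¬ (∃ S : Finset A, V i (S.erase a) < V i S)) → V i (S \ T) = V i S := by
    intro i T
    induction T using Finset.induction_on with
    | empty => intro S _; simp
    | insert a T ha ih =>
      intro S hT
      have h1 : S \ insert a T = (S \ T).erase a := by
        ext x
        simp only [Finset.mem_sdiff, Finset.mem_insert, Finset.mem_erase]
        tauto
      rw [h1, herase i a (hT a (Finset.mem_insert_self _ _)),
        ih S (fun b hb => hT b (Finset.mem_insert_of_mem hb))]
  have hval : ∀ (i : N) (S : Finset A),
      V i (S.filter (fun a => ∃ S : Finset A, V i (S.erase a) < V i S)) = V i S := by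
    intro i S
    have h1 : S.filter (fun a => ∃ S : Finset A, V i (S.erase a) < V i S)
        = S \ S.filter (fun a => ¬ (∃ S : Finset A, V i (S.erase a) < V i S)) := by
      ext x
      simp only [Finset.mem_filter, Finset.mem_sdiff, not_and, not_not]
      tauto
    rw [h1]
    exact hsdiff i _ S (fun a ha => (Finset.mem_filter.1 ha).2)
  have hsub : ∀ t : ZMod ℓ, π' (c t) ⊆ π (c (t + 1)) := fun t => by
    rw [hπ'cycle t]; exact Finset.filter_subset _ _
  -- owner map
  have howner : ∀ j : N, ∃ J : N, π' j ⊆ π J ∧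
      ((∃ t : ZMod ℓ, j = c t) → ∃ t : ZMod ℓ, j = c t ∧ J = c (t + 1)) ∧
      ((∀ t : ZMod ℓ, j ≠ c t) → J = j) := by
    intro j
    by_cases h : ∃ t : ZMod ℓ, j = c t
    · obtain ⟨t, rfl⟩ := h
      exact ⟨c (t + 1), hsub t, fun _ => ⟨t, rfl, rfl⟩, fun h' => absurd rfl (h' t)⟩
    · push_neg at h
      exact ⟨j, by rw [hπ'other j h], fun h' => absurd h' (by push_neg; exact h),
        fun _ => rfl⟩
  choose J hJsub hJcyc hJnot using howner
  have hJinj : ∀ i j : N, i ≠ j → J i ≠ J j := by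
    intro i j hij
    by_cases hi : ∃ t : ZMod ℓ, i = c t
    · obtain ⟨t, hti, htJ⟩ := hJcyc i hi
      by_cases hj : ∃ s : ZMod ℓ, j = c s
      · obtain ⟨s, hsj, hsJ⟩ := hJcyc j hj
        rw [htJ, hsJ]
        intro h
        have hts : t = s := add_right_cancel (hcinj h)
        exact hij (by rw [hti, hsj, hts])
      · push_neg at hj
        rw [htJ, hJnot j hj]
        exact fun h => hj (t + 1) h.symm
    · push_neg at hi
      rw [hJnot i hi]
      by_cases hj : ∃ s : ZMod ℓ, j = c s
      · obtain ⟨s, hsj, hsJ⟩ := hJcyc j hj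
        rw [hsJ]
        exact fun h => hi (s + 1) h
      · push_neg at hj
        rw [hJnot j hj]
        exact hij
  have hgain : ∀ k : N, V k (π' k) ≥ V k (π k) := by
    intro k
    by_cases h : ∃ t : ZMod ℓ, k = c t
    · obtain ⟨t, rfl⟩ := h
      rw [hπ'cycle t, hval]
      exact (hcycle t).le
    · push_neg at h
      rw [hπ'other k h]
  refine ⟨?_, ?_, hgain, ?_, ?_⟩
  · intro i j hij
    exact (hdisj (J i) (J j) (hJinj i j hij)).mono (hJsub i) (hJsub j)
  · intro k b hb
    by_cases h : ∃ t : ZMod ℓ, k = c t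
    · obtain ⟨t, rfl⟩ := h
      rw [hπ'cycle t] at hb
      exact (Finset.mem_filter.1 hb).2
    · push_neg at h
      rw [hπ'other k h] at hb
      exact hor k b hb
  · intro t
    rw [hπ'cycle t, hval]
    exact hcycle t
  · intro i j
    rcases hEF1 i (J j) with h | ⟨b, hb, hvb⟩
    · left
      exact le_trans (le_trans (hmono i _ _ (hJsub j)) h) (hgain i)
    · by_cases hb' : b ∈ π' j
      · right
        refine ⟨b, hb', ?_⟩
        exact le_trans (le_trans (hmono i _ _
          (Finset.erase_subset_erase b (hJsub j))) hvb) (hgain i)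
      · left
        have : π' j ⊆ (π (J j)).erase b := Finset.subset_erase.2 ⟨hJsub j, hb'⟩
        exact le_trans (le_trans (hmono i _ _ this) hvb) (hgain i)
end

section
/- Suppose the agents have identical monotone valuations: there is a monotone valuation V with V(∅) = 0 such that V_i(B) = V(B ∩ A_i) for every agent i and every B ⊆ A, and suppose every item is relevant for at least one agent (A = ⋃_{i∈N} A_i). Then there exists an EF1 orientation: an allocation π of all items with π_i ⊆ A_i for every agent i that is EF1. -/
open scoped Classical

/-- Suppose the agents have identical monotone valuations: there is a
monotone valuation `W` with `W ∅ = 0` such that `V i B = W (B ∩ A_i)` for every agent `i`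
and bundle `B`, where `A_i` is the set of items relevant for `i`; and suppose every item
is relevant for at least one agent. Then an EF1 orientation exists. -/
theorem ef1_orientation_exists_identical_valuations
    {N A : Type*} [Fintype N] [Fintype A] [DecidableEq A]
    (V : N → Finset A → ℝ)
    (hzero : ∀ i : N, V i ∅ = 0)
    (W : Finset A → ℝ)
    (hWmono : ∀ S' S : Finset A, S' ⊆ S → W S' ≤ W S)
    (hWzero : W ∅ = 0)
    (hident : ∀ (i : N) (B : Finset A),
      V i B = W (B.filter (fun a => ∃ S : Finset A, V i (S.erase a) < V i S)))
    (hrel : ∀ a : A, ∃ i : N, ∃ S : Finset A, V i (S.erase a) < V i S) :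
    ∃ π : N → Finset A,
      (∀ i j : N, i ≠ j → Disjoint (π i) (π j)) ∧
      (∀ a : A, ∃ i : N, a ∈ π i) ∧
      (∀ i : N, ∀ a ∈ π i, ∃ S : Finset A, V i (S.erase a) < V i S) ∧
      (∀ i j : N, V i (π i) ≥ V i (π j) ∨
        ∃ a ∈ π j, V i (π i) ≥ V i ((π j).erase a)) := by
  -- `Ai i` is the set of items relevant for agent `i`.
  set Ai : N → Finset A :=
    fun i => Finset.univ.filter (fun a => ∃ S : Finset A, V i (S.erase a) < V i S) with hAi
  have hfilter : ∀ (i : N) (B : Finset A),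
      B.filter (fun a => ∃ S : Finset A, V i (S.erase a) < V i S) = B ∩ Ai i := by
    intro i B
    ext x
    simp only [hAi, Finset.mem_filter, Finset.mem_inter, Finset.mem_univ, true_and]
  -- Main induction: allocate any subset `T` of items maintaining the EF1 invariant.
  have main : ∀ T : Finset A, ∃ π : N → Finset A,
      (∀ i j : N, i ≠ j → Disjoint (π i) (π j)) ∧
      (∀ i, π i ⊆ Ai i) ∧ (∀ i, π i ⊆ T) ∧ (∀ b ∈ T, ∃ i, b ∈ π i) ∧
      (∀ i j : N, W (π i) ≥ W (π j ∩ Ai i) ∨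
        ∃ a ∈ π j ∩ Ai i, W (π i) ≥ W ((π j ∩ Ai i).erase a)) := by
    intro T
    induction T using Finset.induction_on with
    | empty =>
        refine ⟨fun _ => ∅, by simp, by simp, by simp, by simp, ?_⟩
        intro i j
        left
        exact hWmono _ _ (Finset.inter_subset_left)
    | @insert a T haT ih =>
        obtain ⟨π, hdisj, hsubA, hsubT, hcov, hinv⟩ := ih
        have hE : (Finset.univ.filter (fun i : N => a ∈ Ai i)).Nonempty := by
          obtain ⟨i, hi⟩ := hrel a
          exact ⟨i, by simp [hAi, hi]⟩
        obtain ⟨i₀, hi₀mem, hi₀min⟩ :=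
          Finset.exists_min_image _ (fun i => W (π i)) hE
        have hai₀ : a ∈ Ai i₀ := (Finset.mem_filter.mp hi₀mem).2
        have hanotin : ∀ j, a ∉ π j := fun j h => haT (hsubT j h)
        set π' : N → Finset A := fun k => if k = i₀ then insert a (π i₀) else π k with hπ'
        have hπ'i₀ : π' i₀ = insert a (π i₀) := by simp [hπ']
        have hπ'ne : ∀ k, k ≠ i₀ → π' k = π k := by
          intro k hk; simp [hπ', hk]
        have hsub' : ∀ k, π k ⊆ π' k := by
          intro k
          by_cases hk : k = i₀
          · rw [hk, hπ'i₀]; exact Finset.subset_insert _ _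
          · rw [hπ'ne k hk]
        refine ⟨π', ?_, ?_, ?_, ?_, ?_⟩
        · -- pairwise disjoint
          intro i j hij
          have key : ∀ k, k ≠ i₀ → Disjoint (insert a (π i₀)) (π k) := by
            intro k hk
            rw [Finset.disjoint_insert_left]
            exact ⟨hanotin k, hdisj i₀ k (fun h => hk h.symm)⟩
          by_cases hi : i = i₀
          · have hj : j ≠ i₀ := fun h => hij (hi.trans h.symm)
            rw [hi, hπ'i₀, hπ'ne j hj]
            exact key j hj
          · rw [hπ'ne i hi]
            by_cases hj : j = i₀
            · rw [hj, hπ'i₀]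
              exact (key i hi).symm
            · rw [hπ'ne j hj]
              exact hdisj i j hij
        · -- π' i ⊆ Ai i
          intro k
          by_cases hk : k = i₀
          · rw [hk, hπ'i₀]
            exact Finset.insert_subset hai₀ (hsubA i₀)
          · rw [hπ'ne k hk]; exact hsubA k
        · -- π' i ⊆ insert a T
          intro k
          by_cases hk : k = i₀
          · rw [hk, hπ'i₀]
            exact Finset.insert_subset_insert _ (hsubT i₀)
          · rw [hπ'ne k hk]
            exact (hsubT k).trans (Finset.subset_insert _ _)
        · -- coverage
          intro b hb
          rcases Finset.mem_insert.mp hb with hb | hb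
          · exact ⟨i₀, by rw [hπ'i₀]; exact Finset.mem_insert.mpr (Or.inl hb)⟩
          · obtain ⟨i, hi⟩ := hcov b hb
            exact ⟨i, hsub' i hi⟩
        · -- EF1 invariant
          intro i j
          by_cases hj : j = i₀
          · rw [hj]
            by_cases hi : i = i₀
            · rw [hi]
              left
              exact hWmono _ _ Finset.inter_subset_left
            · rw [hπ'ne i hi, hπ'i₀]
              by_cases haAi : a ∈ Ai i
              · -- i is eligible for a, so W (π i₀) ≤ W (π i)
                have hiE : i ∈ Finset.univ.filter (fun k : N => a ∈ Ai k) := by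
                  simp [haAi]
                have hmin : W (π i₀) ≤ W (π i) := hi₀min i hiE
                right
                refine ⟨a, Finset.mem_inter.mpr ⟨Finset.mem_insert_self _ _, haAi⟩, ?_⟩
                have hsubset : (insert a (π i₀) ∩ Ai i).erase a ⊆ π i₀ := by
                  intro x hx
                  have hx1 := Finset.ne_of_mem_erase hx
                  have hx2 := Finset.mem_of_mem_erase hx
                  rcases Finset.mem_insert.mp (Finset.mem_inter.mp hx2).1 with h | h
                  · exact absurd h hx1
                  · exact h
                exact le_trans (hWmono _ _ hsubset) hmin
              · -- a is irrelevant for i : nothing changed from i's viewpoint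
                have heq : insert a (π i₀) ∩ Ai i = π i₀ ∩ Ai i :=
                  Finset.insert_inter_of_notMem haAi
                rw [heq]
                exact hinv i i₀
          · rw [hπ'ne j hj]
            by_cases hi : i = i₀
            · rw [hi, hπ'i₀]
              have hWle : W (π i₀) ≤ W (insert a (π i₀)) :=
                hWmono _ _ (Finset.subset_insert _ _)
              rcases hinv i₀ j with h | ⟨c, hc, h⟩
              · left; exact le_trans h hWle
              · right; exact ⟨c, hc, le_trans h hWle⟩
            · rw [hπ'ne i hi]
              exact hinv i j
  obtain ⟨π, hdisj, hsubAi, _, hcover, hinv⟩ := main Finset.univ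
  refine ⟨π, hdisj, fun b => hcover b (Finset.mem_univ b), ?_, ?_⟩
  · intro i a haπ
    have := hsubAi i haπ
    rw [hAi] at this
    exact (Finset.mem_filter.mp this).2
  · intro i j
    have h1 : V i (π i) = W (π i) := by
      rw [hident i, hfilter, Finset.inter_eq_left.mpr (hsubAi i)]
    have h2 : V i (π j) = W (π j ∩ Ai i) := by rw [hident i, hfilter]
    rcases hinv i j with h | ⟨a, haIn, hW⟩
    · left; rw [h1, h2]; exact h
    · right
      refine ⟨a, (Finset.mem_inter.mp haIn).1, ?_⟩
      have h3 : V i ((π j).erase a) = W ((π j ∩ Ai i).erase a) := by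
        rw [hident i, hfilter]
        congr 1
        ext x
        simp only [Finset.mem_inter, Finset.mem_erase]
        tauto
      rw [h1, h3]
      exact hW
end

section
/- Suppose all valuations are monotone with V_i(∅) = 0 and the instance is decomposable. If for every group g there is an allocation π^g of the items of g to the agents in N_g that is EF1 for the restricted instance, then the combined allocation π defined by π_i = ⋃_g π^g_i for each agent i is an EF1 orientation of the whole instance. -/
open scoped Classical

/-- The agent list `N_a` of an item `a`: the set of agents for which `a` is relevant. -/
noncomputable def agentList {N A : Type*} [Fintype N] [DecidableEq A]
    (V : N → Finset A → ℝ) (a : A) : Finset N :=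
  Finset.univ.filter (fun i => ∃ S : Finset A, V i (S.erase a) < V i S)

/-- The group of an item `a`: the set of all items with the same agent list as `a`. -/
noncomputable def group {N A : Type*} [Fintype N] [Fintype A] [DecidableEq A]
    (V : N → Finset A → ℝ) (a : A) : Finset A :=
  Finset.univ.filter (fun b => agentList V b = agentList V a)

/-- The value of a bundle only depends on the items relevant for the agent. -/
lemma val_eq_filter_relevant {N A : Type*} [Fintype N] [DecidableEq N] [DecidableEq A]
    (V : N → Finset A → ℝ)
    (hmono : ∀ i : N, ∀ S' S : Finset A, S' ⊆ S → V i S' ≤ V i S)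
    (i : N) (S : Finset A) :
    V i S = V i (S.filter (fun a => i ∈ agentList V a)) := by
  classical
  induction S using Finset.strongInduction with
  | _ S ih =>
    by_cases h : ∀ a ∈ S, i ∈ agentList V a
    · rw [Finset.filter_true_of_mem h]
    · push_neg at h
      obtain ⟨a, haS, hna⟩ := h
      have hirr : ∀ T : Finset A, V i T ≤ V i (T.erase a) := by
        intro T
        by_contra hc
        push_neg at hc
        exact hna (by simpa [agentList] using ⟨T, hc⟩)
      have h1 : V i S = V i (S.erase a) :=
        le_antisymm (hirr S) (hmono i _ _ (Finset.erase_subset _ _))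
      have h2 := ih (S.erase a) (Finset.erase_ssubset haS)
      rw [h1, h2]
      congr 1
      ext x
      simp only [Finset.mem_filter, Finset.mem_erase]
      constructor
      · rintro ⟨⟨hxa, hxS⟩, hrel⟩; exact ⟨hxS, hrel⟩
      · rintro ⟨hxS, hrel⟩
        refine ⟨⟨?_, hxS⟩, hrel⟩
        rintro rfl; exact hna hrel

/-- Suppose all valuations are monotone with `V i ∅ = 0` and the
instance is decomposable (any two items have either the same agent list or agent lists
sharing at most one agent). If `π` is an allocation of all items in which every item goes
to an agent in its agent list and whose restriction to each group is EF1, then `π` is an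
EF1 orientation of the whole instance. -/
theorem decomposable_groupwise_EF1_gives_EF1_orientation
    {N A : Type*} [Fintype N] [Fintype A] [DecidableEq N] [DecidableEq A]
    (V : N → Finset A → ℝ)
    (hmono : ∀ i : N, ∀ S' S : Finset A, S' ⊆ S → V i S' ≤ V i S)
    (hzero : ∀ i : N, V i ∅ = 0)
    (hdecomp : ∀ a b : A,
      agentList V a = agentList V b ∨ (agentList V a ∩ agentList V b).card ≤ 1)
    (π : N → Finset A)
    (hdisj : ∀ i j : N, i ≠ j → Disjoint (π i) (π j))
    (hcover : ∀ a : A, ∃ i : N, a ∈ π i)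
    (hlist : ∀ i : N, ∀ a ∈ π i, i ∈ agentList V a)
    (hgroupEF1 : ∀ (g : A) (i j : N),
      V i (π i ∩ group V g) ≥ V i (π j ∩ group V g) ∨
      ∃ a ∈ π j ∩ group V g,
        V i (π i ∩ group V g) ≥ V i ((π j ∩ group V g).erase a)) :
    (∀ i : N, ∀ a ∈ π i, ∃ S : Finset A, V i (S.erase a) < V i S) ∧
    (∀ i j : N, V i (π i) ≥ V i (π j) ∨
      ∃ a ∈ π j, V i (π i) ≥ V i ((π j).erase a)) := by
  classical
  constructor
  · intro i a ha
    have := hlist i a ha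
    simpa [agentList] using this
  · intro i j
    by_cases hij : i = j
    · subst hij; left; exact le_refl _
    by_cases hemp : (π j).filter (fun a => i ∈ agentList V a) = ∅
    · left
      have h1 : V i (π j) = 0 := by
        rw [val_eq_filter_relevant V hmono i (π j), hemp, hzero]
      have h2 : (0 : ℝ) ≤ V i (π i) := by
        have := hmono i ∅ (π i) (Finset.empty_subset _)
        rwa [hzero] at this
      rw [h1]; exact h2
    · obtain ⟨a₀, ha₀⟩ := Finset.nonempty_iff_ne_empty.mpr hemp
      rw [Finset.mem_filter] at ha₀
      obtain ⟨ha₀j, ha₀rel⟩ := ha₀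
      set G := group V a₀ with hG
      -- every relevant-for-i item of π j is in group G
      have hkey : ∀ x ∈ π j, i ∈ agentList V x → x ∈ G := by
        intro x hxj hxrel
        have hxi : i ∈ agentList V x := hxrel
        have hxjl : j ∈ agentList V x := hlist j x hxj
        have ha₀i : i ∈ agentList V a₀ := ha₀rel
        have ha₀jl : j ∈ agentList V a₀ := hlist j a₀ ha₀j
        rcases hdecomp x a₀ with heq | hcard
        · simp [hG, group, heq]
        · exfalso
          have hsub : ({i, j} : Finset N) ⊆ agentList V x ∩ agentList V a₀ := by
            intro y hy
            simp only [Finset.mem_insert, Finset.mem_singleton] at hy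
            rcases hy with rfl | rfl <;> simp [Finset.mem_inter, *]
          have h2 : (2 : ℕ) ≤ (agentList V x ∩ agentList V a₀).card := by
            calc 2 = ({i, j} : Finset N).card := (Finset.card_pair hij).symm
              _ ≤ _ := Finset.card_le_card hsub
          omega
      -- V i (π j) = V i (π j ∩ G)
      have hfilter_sub : (π j).filter (fun a => i ∈ agentList V a) ⊆ π j ∩ G := by
        intro x hx
        rw [Finset.mem_filter] at hx
        exact Finset.mem_inter.mpr ⟨hx.1, hkey x hx.1 hx.2⟩
      have hfeq : (π j ∩ G).filter (fun a => i ∈ agentList V a) = (π j).filter (fun a => i ∈ agentList V a) := by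
        ext x
        simp only [Finset.mem_filter, Finset.mem_inter]
        constructor
        · rintro ⟨⟨h1, _⟩, h2⟩; exact ⟨h1, h2⟩
        · rintro ⟨h1, h2⟩; exact ⟨⟨h1, hkey x h1 h2⟩, h2⟩
      have hVj : V i (π j) = V i (π j ∩ G) := by
        rw [val_eq_filter_relevant V hmono i (π j),
            val_eq_filter_relevant V hmono i (π j ∩ G), hfeq]
      have hVi : V i (π i ∩ G) ≤ V i (π i) :=
        hmono i _ _ (Finset.inter_subset_left)
      rcases hgroupEF1 a₀ i j with h | ⟨a, haG, hge⟩
      · left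
        rw [hVj]
        exact le_trans h hVi
      · right
        refine ⟨a, (Finset.mem_inter.mp haG).1, ?_⟩
        have hsub2 : ((π j).erase a).filter (fun a => i ∈ agentList V a) ⊆ (π j ∩ G).erase a := by
          intro x hx
          rw [Finset.mem_filter, Finset.mem_erase] at hx
          exact Finset.mem_erase.mpr ⟨hx.1.1,
            Finset.mem_inter.mpr ⟨hx.1.2, hkey x hx.1.2 hx.2⟩⟩
        calc V i ((π j).erase a) = V i (((π j).erase a).filter (fun a => i ∈ agentList V a)) :=
              val_eq_filter_relevant V hmono i _
          _ ≤ V i ((π j ∩ G).erase a) := hmono i _ _ hsub2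
          _ ≤ V i (π i ∩ G) := hge
          _ ≤ V i (π i) := hVi
end

section
/- Suppose all valuations are monotone with V_i(∅) = 0 and the instance is decomposable. If for every group g there is an allocation π^g of the items of g to the agents in N_g that is EFX for the restricted instance (for all agents i, j and every a ∈ π^g_j, V_i(π^g_i) ≥ V_i(π^g_j \ {a})), then the combined allocation π defined by π_i = ⋃_g π^g_i for each agent i is an EFXr orientation of the whole instance. -/
open scoped Classical

private lemma strip_irrelevant {N A : Type*} [Fintype N] [DecidableEq N] [DecidableEq A]
    (V : N → Finset A → ℝ)
    (hmono : ∀ i : N, ∀ S' S : Finset A, S' ⊆ S → V i S' ≤ V i S)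
    (i : N) : ∀ S : Finset A, V i (S.filter (fun b => i ∈ agentList V b)) = V i S := by
  intro S
  induction S using Finset.strongInductionOn with
  | _ S ih =>
    by_cases h : S.filter (fun b => i ∈ agentList V b) = S
    · rw [h]
    · have hsub : S.filter (fun b => i ∈ agentList V b) ⊆ S := Finset.filter_subset _ _
      obtain ⟨b, hbS, hbn⟩ : ∃ b ∈ S, b ∉ S.filter (fun b => i ∈ agentList V b) := by
        by_contra hc
        push_neg at hc
        exact h (Finset.Subset.antisymm hsub hc)
      have hbir : i ∉ agentList V b := by
        intro hib
        exact hbn (Finset.mem_filter.mpr ⟨hbS, hib⟩)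
      have hval : V i (S.erase b) = V i S := by
        have h1 : V i (S.erase b) ≤ V i S := hmono i _ _ (Finset.erase_subset _ _)
        have h2 : ¬ V i (S.erase b) < V i S := by
          intro hlt
          exact hbir (Finset.mem_filter.mpr ⟨Finset.mem_univ _, ⟨S, hlt⟩⟩)
        linarith
      have hfe : (S.erase b).filter (fun c => i ∈ agentList V c)
          = S.filter (fun c => i ∈ agentList V c) := by
        rw [Finset.filter_erase]
        exact Finset.erase_eq_of_notMem hbn
      have := ih (S.erase b) (Finset.erase_ssubset hbS)
      rw [hfe] at this
      rw [this, hval]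

/-- Suppose all valuations are monotone with `V i ∅ = 0` and the
instance is decomposable. If `π` is an allocation of all items in which every item goes
to an agent in its agent list and whose restriction to each group is EFX, then `π` is an
EFXr orientation (envy-free up to any relevant item) of the whole instance. -/
theorem decomposable_groupwise_EFX_gives_EFXr_orientation
    {N A : Type*} [Fintype N] [Fintype A] [DecidableEq N] [DecidableEq A]
    (V : N → Finset A → ℝ)
    (hmono : ∀ i : N, ∀ S' S : Finset A, S' ⊆ S → V i S' ≤ V i S)
    (hzero : ∀ i : N, V i ∅ = 0)
    (hdecomp : ∀ a b : A,
      agentList V a = agentList V b ∨ (agentList V a ∩ agentList V b).card ≤ 1)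
    (π : N → Finset A)
    (hdisj : ∀ i j : N, i ≠ j → Disjoint (π i) (π j))
    (hcover : ∀ a : A, ∃ i : N, a ∈ π i)
    (hlist : ∀ i : N, ∀ a ∈ π i, i ∈ agentList V a)
    (hgroupEFX : ∀ (g : A) (i j : N), ∀ a ∈ π j ∩ group V g,
      V i (π i ∩ group V g) ≥ V i ((π j ∩ group V g).erase a)) :
    (∀ i : N, ∀ a ∈ π i, ∃ S : Finset A, V i (S.erase a) < V i S) ∧
    (∀ i j : N, ∀ a ∈ π j, (∃ S : Finset A, V i (S.erase a) < V i S) →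
      V i (π i) ≥ V i ((π j).erase a)) := by
  constructor
  · intro i a ha
    have := hlist i a ha
    simpa [agentList] using this
  · intro i j a ha hrel
    have hia : i ∈ agentList V a := by
      simp only [agentList, Finset.mem_filter]
      exact ⟨Finset.mem_univ _, hrel⟩
    by_cases hij : i = j
    · subst hij
      exact hmono i _ _ (Finset.erase_subset _ _)
    -- i ≠ j case
    have hja : j ∈ agentList V a := hlist j a ha
    -- every item of π j relevant for i lies in group V a
    have hkey : ((π j).erase a).filter (fun b => i ∈ agentList V b)
        ⊆ (π j ∩ group V a).erase a := by
      intro b hb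
      simp only [Finset.mem_filter, Finset.mem_erase] at hb
      obtain ⟨⟨hba, hbj⟩, hib⟩ := hb
      have hjb : j ∈ agentList V b := hlist j b hbj
      have : agentList V a = agentList V b := by
        rcases hdecomp a b with h | h
        · exact h
        · exfalso
          have hsub : ({i, j} : Finset N) ⊆ agentList V a ∩ agentList V b := by
            intro x hx
            simp only [Finset.mem_insert, Finset.mem_singleton] at hx
            rcases hx with rfl | rfl
            · exact Finset.mem_inter.mpr ⟨hia, hib⟩
            · exact Finset.mem_inter.mpr ⟨hja, hjb⟩
          have hcard : ({i, j} : Finset N).card = 2 := Finset.card_pair hij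
          have := Finset.card_le_card hsub
          omega
      refine Finset.mem_erase.mpr ⟨hba, Finset.mem_inter.mpr ⟨hbj, ?_⟩⟩
      simp [group, this.symm]
    have haig : a ∈ π j ∩ group V a := by
      refine Finset.mem_inter.mpr ⟨ha, ?_⟩
      simp [group]
    calc V i ((π j).erase a)
        = V i (((π j).erase a).filter (fun b => i ∈ agentList V b)) :=
          (strip_irrelevant V hmono i _).symm
      _ ≤ V i ((π j ∩ group V a).erase a) := hmono i _ _ hkey
      _ ≤ V i (π i ∩ group V a) := hgroupEFX a i j a haig
      _ ≤ V i (π i) := hmono i _ _ (Finset.inter_subset_left)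
end

section
/- Suppose every item is relevant for exactly two agents (|N_a| = 2 for every a ∈ A) — a multigraph instance in which agents are vertices and each item is an edge joining the two agents in its agent list — and all valuations are monotone with V_i(∅) = 0. Then an EFXr orientation always exists: there is an allocation π of all items with π_i ⊆ A_i for every agent i such that for every pair of agents i, j and every a ∈ π_j that is relevant for i, V_i(π_i) ≥ V_i(π_j \ {a}). -/
open scoped Classical

/-- Removing irrelevant items does not change the value: the value of a set equals the
value of its subset of relevant items. -/
private lemma val_filter_rel {A : Type*} [DecidableEq A] (W : Finset A → ℝ)
    [DecidablePred (fun a : A => ∃ T : Finset A, W (T.erase a) < W T)]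
    (hm : ∀ S' S : Finset A, S' ⊆ S → W S' ≤ W S) (S : Finset A) :
    W (S.filter (fun a => ∃ T : Finset A, W (T.erase a) < W T)) = W S := by
  induction S using Finset.strongInductionOn with
  | _ S ih =>
    by_cases h : ∀ a ∈ S, ∃ T : Finset A, W (T.erase a) < W T
    · rw [Finset.filter_true_of_mem h]
    · push_neg at h
      obtain ⟨a, haS, hirr⟩ := h
      have hWe : W (S.erase a) = W S :=
        le_antisymm (hm _ _ (Finset.erase_subset _ _)) (hirr S)
      have hnotrel : ¬ ∃ T : Finset A, W (T.erase a) < W T := by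
        rintro ⟨T, hT⟩
        exact absurd (hirr T) (not_le.mpr hT)
      have hfe : S.filter (fun a => ∃ T : Finset A, W (T.erase a) < W T)
          = (S.erase a).filter (fun a => ∃ T : Finset A, W (T.erase a) < W T) := by
        rw [Finset.filter_erase]
        exact (Finset.erase_eq_of_notMem (by simp [hnotrel])).symm
      rw [hfe, ih _ (Finset.erase_ssubset haS), hWe]

/-- Two-bundle EFX partition for a single monotone valuation (leximin++ argument). -/
private lemma identical_EFX {A : Type*} [DecidableEq A] (W : Finset A → ℝ)
    (hm : ∀ S' S : Finset A, S' ⊆ S → W S' ≤ W S) (E : Finset A) :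
    ∃ X ⊆ E, (∀ a ∈ E \ X, W ((E \ X).erase a) ≤ W X) ∧
      (∀ a ∈ X, W (X.erase a) ≤ W (E \ X)) := by
  classical
  set F : Finset A → ℝ := fun X => min (W X) (W (E \ X)) with hF
  obtain ⟨m, hmP, hmmax⟩ :=
    Finset.exists_max_image E.powerset F ⟨∅, Finset.empty_mem_powerset E⟩
  set c : Finset A → ℕ := fun X => if W X < W (E \ X) then X.card else (E \ X).card with hc
  obtain ⟨X, hXP', hcmax⟩ := Finset.exists_max_image
      (E.powerset.filter (fun Y => F m ≤ F Y)) c ⟨m, by simp [hmP]⟩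
  rw [Finset.mem_filter] at hXP'
  obtain ⟨hXP, hFX⟩ := hXP'
  have hXE : X ⊆ E := Finset.mem_powerset.mp hXP
  have hFXmax : ∀ Y ∈ E.powerset, F Y ≤ F X := fun Y hY => le_trans (hmmax Y hY) hFX
  refine ⟨X, hXE, ?_, ?_⟩
  · intro a ha
    by_contra hcon0
    push_neg at hcon0
    obtain ⟨haE, haX⟩ := Finset.mem_sdiff.mp ha
    set X' := insert a X with hX'
    have hcon : W X < W (E \ X') := by
      rw [Finset.sdiff_insert]; exact hcon0
    have hX'E : X' ⊆ E := Finset.insert_subset haE hXE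
    have h2 : W (E \ X') ≤ W (E \ X) := by
      rw [Finset.sdiff_insert]; exact hm _ _ (Finset.erase_subset _ _)
    have hXY : W X < W (E \ X) := lt_of_lt_of_le hcon h2
    have hFXval : F X = W X := min_eq_left hXY.le
    have hXX' : W X ≤ W X' := hm _ _ (Finset.subset_insert _ _)
    rcases lt_or_eq_of_le hXX' with hlt | heq
    · have hFlt : F X < F X' := by
        rw [hFXval]
        exact lt_min hlt hcon
      exact absurd (hFXmax X' (Finset.mem_powerset.mpr hX'E)) (not_le.mpr hFlt)
    · -- heq : W X = W X'
      have h1' : W X' < W (E \ X') := heq ▸ hcon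
      have hFX' : F X' = W X := by
        show min (W X') (W (E \ X')) = W X
        rw [min_eq_left h1'.le, ← heq]
      have hX'mem : X' ∈ E.powerset.filter (fun Y => F m ≤ F Y) := by
        rw [Finset.mem_filter]
        refine ⟨Finset.mem_powerset.mpr hX'E, ?_⟩
        rw [hFX', ← hFXval]; exact hFX
      have hcle := hcmax X' hX'mem
      have hcX : c X = X.card := by
        show (if W X < W (E \ X) then X.card else (E \ X).card) = X.card
        rw [if_pos hXY]
      have hcX' : c X' = X.card + 1 := by
        show (if W X' < W (E \ X') then X'.card else (E \ X').card) = X.card + 1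
        rw [if_pos h1', hX', Finset.card_insert_of_notMem haX]
      rw [hcX, hcX'] at hcle
      omega
  · intro a ha
    by_contra hcon
    push_neg at hcon
    have haE : a ∈ E := hXE ha
    set X' := X.erase a with hX'
    have hEX' : E \ X' = insert a (E \ X) := by
      ext b
      simp only [hX', Finset.mem_sdiff, Finset.mem_erase, Finset.mem_insert]
      constructor
      · rintro ⟨hbE, hb⟩
        by_cases hba : b = a
        · exact Or.inl hba
        · exact Or.inr ⟨hbE, fun hbX => hb ⟨hba, hbX⟩⟩
      · rintro (rfl | ⟨hbE, hbX⟩)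
        · exact ⟨haE, fun h => h.1 rfl⟩
        · exact ⟨hbE, fun h => hbX h.2⟩
    have hX'X : W X' ≤ W X := hm _ _ (Finset.erase_subset _ _)
    have hYX : W (E \ X) < W X := lt_of_lt_of_le hcon hX'X
    have hFXval : F X = W (E \ X) := min_eq_right hYX.le
    have hYY' : W (E \ X) ≤ W (E \ X') := by
      rw [hEX']; exact hm _ _ (Finset.subset_insert _ _)
    have hX'E : X' ⊆ E := (Finset.erase_subset _ _).trans hXE
    rcases lt_or_eq_of_le hYY' with hlt | heq
    · have hFlt : F X < F X' := by
        rw [hFXval]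
        exact lt_min hcon hlt
      exact absurd (hFXmax X' (Finset.mem_powerset.mpr hX'E)) (not_le.mpr hFlt)
    · -- heq : W (E \ X) = W (E \ X')
      have hFX' : F X' = W (E \ X) := by
        show min (W X') (W (E \ X')) = W (E \ X)
        rw [← heq, min_eq_right hcon.le]
      have hX'mem : X' ∈ E.powerset.filter (fun Y => F m ≤ F Y) := by
        rw [Finset.mem_filter]
        refine ⟨Finset.mem_powerset.mpr hX'E, ?_⟩
        rw [hFX', ← hFXval]; exact hFX
      have hcle := hcmax X' hX'mem
      have hcX : c X = (E \ X).card := by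
        show (if W X < W (E \ X) then X.card else (E \ X).card) = (E \ X).card
        rw [if_neg (not_lt.mpr hYX.le)]
      have hcX' : c X' = (E \ X).card + 1 := by
        show (if W X' < W (E \ X') then X'.card else (E \ X').card) = (E \ X).card + 1
        rw [if_neg (by rw [← heq]; exact not_lt.mpr hcon.le), hEX',
          Finset.card_insert_of_notMem (by simp [Finset.mem_sdiff, ha])]
      rw [hcX, hcX'] at hcle
      omega

/-- Two-agent EFX: cut (by `Vi`) and choose (by `Vj`). -/
private lemma two_agent_EFX {A : Type*} [DecidableEq A]
    (Vi Vj : Finset A → ℝ)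
    (hi : ∀ S' S : Finset A, S' ⊆ S → Vi S' ≤ Vi S)
    (hj : ∀ S' S : Finset A, S' ⊆ S → Vj S' ≤ Vj S) (E : Finset A) :
    ∃ X ⊆ E, (∀ a ∈ E \ X, Vi ((E \ X).erase a) ≤ Vi X) ∧
      (∀ a ∈ X, Vj (X.erase a) ≤ Vj (E \ X)) := by
  obtain ⟨X, hXE, h1, h2⟩ := identical_EFX Vi hi E
  by_cases hch : Vj X ≤ Vj (E \ X)
  · exact ⟨X, hXE, h1,
      fun a ha => le_trans (hj _ _ (Finset.erase_subset _ _)) hch⟩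
  · push_neg at hch
    have hES : E \ (E \ X) = X := Finset.sdiff_sdiff_eq_self hXE
    refine ⟨E \ X, Finset.sdiff_subset, ?_, ?_⟩
    · rw [hES]; exact h2
    · rw [hES]
      intro a ha
      exact le_trans (hj _ _ (Finset.erase_subset _ _)) hch.le

/-- Suppose every item is relevant to exactly two agents (a multigraph
instance: agents are vertices, each item is an edge joining the two agents for which it
is relevant) and all valuations are monotone with `V i ∅ = 0`. Then an EFXr orientation
always exists: an allocation of all items in which every agent receives only items
relevant to them and any envy is eliminated by removing any relevant item from the
envied bundle. -/
theorem multigraph_EFXr_orientation_exists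
    {N A : Type*} [Fintype N] [Fintype A] [DecidableEq A]
    (V : N → Finset A → ℝ)
    (hmono : ∀ i : N, ∀ S' S : Finset A, S' ⊆ S → V i S' ≤ V i S)
    (hzero : ∀ i : N, V i ∅ = 0)
    (htwo : ∀ a : A,
      (Finset.univ.filter
        (fun i : N => ∃ S : Finset A, V i (S.erase a) < V i S)).card = 2) :
    ∃ π : N → Finset A,
      (∀ i j : N, i ≠ j → Disjoint (π i) (π j)) ∧
      (∀ a : A, ∃ i : N, a ∈ π i) ∧
      (∀ i : N, ∀ a ∈ π i, ∃ S : Finset A, V i (S.erase a) < V i S) ∧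
      (∀ i j : N, ∀ a ∈ π j, (∃ S : Finset A, V i (S.erase a) < V i S) →
        V i (π i) ≥ V i ((π j).erase a)) := by
  classical
  set R : A → Finset N :=
    fun a => Finset.univ.filter (fun i : N => ∃ S : Finset A, V i (S.erase a) < V i S)
    with hR
  have hR2 : ∀ a, (R a).card = 2 := htwo
  have hRel : ∀ i a, i ∈ R a ↔ ∃ S : Finset A, V i (S.erase a) < V i S := by
    intro i a; simp [hR]
  set Es : Finset N → Finset A := fun s => Finset.univ.filter (fun a => R a = s) with hEs
  have main : ∀ s : Finset N, s.card = 2 → ∃ p : N × N × Finset A,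
      p.1 ≠ p.2.1 ∧ s = {p.1, p.2.1} ∧ p.2.2 ⊆ Es s ∧
      (∀ a ∈ Es s \ p.2.2, V p.1 ((Es s \ p.2.2).erase a) ≤ V p.1 p.2.2) ∧
      (∀ a ∈ p.2.2, V p.2.1 (p.2.2.erase a) ≤ V p.2.1 (Es s \ p.2.2)) := by
    intro s hs
    obtain ⟨i, j, hij, rfl⟩ := Finset.card_eq_two.mp hs
    obtain ⟨X, hX, h1, h2⟩ := two_agent_EFX (V i) (V j) (hmono i) (hmono j) (Es {i, j})
    exact ⟨⟨i, j, X⟩, hij, rfl, hX, h1, h2⟩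
  choose p hne hpair hsub hE1 hE2 using main
  have pcongr : ∀ (s t : Finset N) (hs : s.card = 2) (ht : t.card = 2),
      s = t → p s hs = p t ht := by
    rintro s t hs ht rfl; rfl
  set owner : A → N := fun a =>
    if a ∈ (p (R a) (hR2 a)).2.2 then (p (R a) (hR2 a)).1 else (p (R a) (hR2 a)).2.1
    with howner
  set π : N → Finset A := fun i => Finset.univ.filter (fun a => owner a = i) with hπ
  have mem_pi : ∀ a i, a ∈ π i ↔ owner a = i := by
    intro a i; simp [hπ]
  have owner_mem : ∀ a, owner a ∈ R a := by
    intro a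
    have h := hpair (R a) (hR2 a)
    by_cases hx : a ∈ (p (R a) (hR2 a)).2.2
    · have h1 : (p (R a) (hR2 a)).1 ∈
          ({(p (R a) (hR2 a)).1, (p (R a) (hR2 a)).2.1} : Finset N) := by simp
      rw [← h] at h1
      simpa [howner, hx] using h1
    · have h1 : (p (R a) (hR2 a)).2.1 ∈
          ({(p (R a) (hR2 a)).1, (p (R a) (hR2 a)).2.1} : Finset N) := by simp
      rw [← h] at h1
      simpa [howner, hx] using h1
  refine ⟨π, ?_, ?_, ?_, ?_⟩
  · -- disjoint
    intro i j hij
    rw [Finset.disjoint_left]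
    intro a hai haj
    rw [mem_pi] at hai haj
    exact hij (hai ▸ haj ▸ rfl)
  · -- coverage
    intro a
    exact ⟨owner a, (mem_pi a (owner a)).mpr rfl⟩
  · -- orientation
    intro i a ha
    rw [mem_pi] at ha
    exact (hRel i a).mp (ha ▸ owner_mem a)
  · -- EFX
    intro i j a haj hrel
    rw [mem_pi] at haj
    by_cases hij : i = j
    · subst hij
      exact hmono i _ _ (Finset.erase_subset _ _)
    · have hiR : i ∈ R a := (hRel i a).mpr hrel
      have hjR : j ∈ R a := haj ▸ owner_mem a
      have hcard : ({i, j} : Finset N).card = 2 := Finset.card_pair hij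
      have Rb_eq : ∀ b : A, i ∈ R b → j ∈ R b → R b = {i, j} := by
        intro b h1 h2
        refine (Finset.eq_of_subset_of_card_le ?_ ?_).symm
        · intro x hx
          rcases Finset.mem_insert.mp hx with rfl | hx
          · exact h1
          · rw [Finset.mem_singleton] at hx; subst hx; exact h2
        · rw [hR2 b, hcard]
      have hRa : R a = {i, j} := Rb_eq a hiR hjR
      set q := p {i, j} hcard with hq
      have owner_eq : ∀ b : A, R b = {i, j} →
          owner b = if b ∈ q.2.2 then q.1 else q.2.1 := by
        intro b hb
        have hpe : p (R b) (hR2 b) = q := pcongr (R b) {i, j} (hR2 b) hcard hb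
        simp only [howner, hpe]
      have hmemEs : ∀ b : A, b ∈ Es {i, j} ↔ R b = {i, j} := by
        intro b; simp [hEs]
      have hpq : ({i, j} : Finset N) = {q.1, q.2.1} := hpair {i, j} hcard
      have hne' : q.1 ≠ q.2.1 := hne {i, j} hcard
      have hi_mem : i = q.1 ∨ i = q.2.1 := by
        have : i ∈ ({q.1, q.2.1} : Finset N) := hpq ▸ Finset.mem_insert_self i {j}
        simpa using this
      have hj_mem : j = q.1 ∨ j = q.2.1 := by
        have : j ∈ ({q.1, q.2.1} : Finset N) := by
          rw [← hpq]; simp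
        simpa using this
      have hQ : ∀ b : A, (∃ S : Finset A, V i (S.erase b) < V i S) ↔ i ∈ R b :=
        fun b => (hRel i b).symm
      -- two cases
      rcases hi_mem with hii | hii
      · -- i = q.1, so j = q.2.1
        have hjj : j = q.2.1 := by
          rcases hj_mem with h | h
          · exact absurd (hii ▸ h : j = i) (Ne.symm hij)
          · exact h
        have hXpi : q.2.2 ⊆ π i := by
          intro b hb
          have hbEs : b ∈ Es {i, j} := hsub {i, j} hcard hb
          have hbR : R b = {i, j} := (hmemEs b).mp hbEs
          rw [mem_pi, owner_eq b hbR, if_pos hb, hii]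
        have hfilt : (π j).filter (fun b => ∃ S : Finset A, V i (S.erase b) < V i S)
            = Es {i, j} \ q.2.2 := by
          ext b
          rw [Finset.mem_filter, Finset.mem_sdiff, hmemEs b, mem_pi]
          constructor
          · rintro ⟨hbj, hb⟩
            have hbiR : i ∈ R b := (hRel i b).mpr hb
            have hbjR : j ∈ R b := hbj ▸ owner_mem b
            have hbR : R b = {i, j} := Rb_eq b hbiR hbjR
            refine ⟨hbR, fun hbX => ?_⟩
            rw [owner_eq b hbR, if_pos hbX, ← hii] at hbj
            exact hij hbj
          · rintro ⟨hbR, hbX⟩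
            refine ⟨?_, (hRel i b).mp (by rw [hbR]; simp)⟩
            rw [owner_eq b hbR, if_neg hbX, ← hjj]
        have haEs : a ∈ Es {i, j} \ q.2.2 := by
          rw [Finset.mem_sdiff, hmemEs a]
          refine ⟨hRa, fun haX => ?_⟩
          rw [owner_eq a hRa, if_pos haX, ← hii] at haj
          exact hij haj
        have key := hE1 {i, j} hcard a haEs
        rw [← hii] at key
        calc V i ((π j).erase a)
            = V i (((π j).erase a).filter
                (fun b => ∃ S : Finset A, V i (S.erase b) < V i S)) :=
              (val_filter_rel (V i) (hmono i) _).symm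
          _ = V i (((π j).filter
                (fun b => ∃ S : Finset A, V i (S.erase b) < V i S)).erase a) := by
              rw [Finset.filter_erase]
          _ = V i ((Es {i, j} \ q.2.2).erase a) := by rw [hfilt]
          _ ≤ V i q.2.2 := key
          _ ≤ V i (π i) := hmono i _ _ hXpi
      · -- i = q.2.1, so j = q.1
        have hjj : j = q.1 := by
          rcases hj_mem with h | h
          · exact h
          · exact absurd (hii ▸ h : j = i) (Ne.symm hij)
        have hYpi : Es {i, j} \ q.2.2 ⊆ π i := by
          intro b hb
          rw [Finset.mem_sdiff, hmemEs b] at hb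
          rw [mem_pi, owner_eq b hb.1, if_neg hb.2, ← hii]
        have hfilt : (π j).filter (fun b => ∃ S : Finset A, V i (S.erase b) < V i S)
            = q.2.2 := by
          ext b
          rw [Finset.mem_filter, mem_pi]
          constructor
          · rintro ⟨hbj, hb⟩
            have hbiR : i ∈ R b := (hRel i b).mpr hb
            have hbjR : j ∈ R b := hbj ▸ owner_mem b
            have hbR : R b = {i, j} := Rb_eq b hbiR hbjR
            by_contra hbX
            rw [owner_eq b hbR, if_neg hbX, ← hii] at hbj
            exact hij hbj
          · intro hbX
            have hbEs : b ∈ Es {i, j} := hsub {i, j} hcard hbX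
            have hbR : R b = {i, j} := (hmemEs b).mp hbEs
            refine ⟨?_, (hRel i b).mp (by rw [hbR]; simp)⟩
            rw [owner_eq b hbR, if_pos hbX, ← hjj]
        have haX : a ∈ q.2.2 := by
          by_contra haX
          rw [owner_eq a hRa, if_neg haX, ← hii] at haj
          exact hij haj
        have key := hE2 {i, j} hcard a haX
        rw [← hii] at key
        calc V i ((π j).erase a)
            = V i (((π j).erase a).filter
                (fun b => ∃ S : Finset A, V i (S.erase b) < V i S)) :=
              (val_filter_rel (V i) (hmono i) _).symm
          _ = V i (((π j).filter
                (fun b => ∃ S : Finset A, V i (S.erase b) < V i S)).erase a) := by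
              rw [Finset.filter_erase]
          _ = V i (q.2.2.erase a) := by rw [hfilt]
          _ ≤ V i (Es {i, j} \ q.2.2) := key
          _ ≤ V i (π i) := hmono i _ _ hYpi
end

section
/- Consider a graph instance with additive symmetric valuations, and let π be an EFX orientation. Let e = {u, w} be an edge whose weight is strictly greater than the total weight of all other edges incident to u. If e ∈ π_w, then π_w = {e}, i.e. the bundle containing e contains no other edge. -/
/-- Additive symmetric valuations on a graph: an agent (vertex) values an edge at its
weight if the agent is one of its endpoints and at `0` otherwise. -/
noncomputable def edgeVal {V E : Type*} [DecidableEq V]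
    (ends : E → V × V) (wt : E → ℝ) (u : V) (a : E) : ℝ :=
  if u = (ends a).1 ∨ u = (ends a).2 then wt a else 0

/-- In a graph instance with positive edge weights and additive
symmetric valuations, let `π` be an EFX orientation and let `e` be an edge with endpoints
`u ≠ w` whose weight is strictly greater than the total weight of all other edges
incident to `u`. If `e` is allocated to `w`, then the bundle of `w` is exactly `{e}`. -/
theorem heavy_edge_gets_singleton_bundle
    {V E : Type*} [Fintype E] [DecidableEq V] [DecidableEq E]
    (ends : E → V × V) (wt : E → ℝ) (hwt : ∀ a : E, 0 < wt a)
    (π : V → Finset E)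
    (hdisj : ∀ u w : V, u ≠ w → Disjoint (π u) (π w))
    (hcover : ∀ a : E, ∃ u : V, a ∈ π u)
    (hor : ∀ u : V, ∀ a ∈ π u, u = (ends a).1 ∨ u = (ends a).2)
    (hefx : ∀ u w : V, ∀ a ∈ π w,
      (∑ b ∈ π u, edgeVal ends wt u b) ≥ ∑ b ∈ (π w).erase a, edgeVal ends wt u b)
    (e : E) (u w : V) (huw : u ≠ w)
    (hends : ends e = (u, w) ∨ ends e = (w, u))
    (hheavy : (∑ b ∈ Finset.univ.filter
        (fun b : E => b ≠ e ∧ (u = (ends b).1 ∨ u = (ends b).2)), wt b) < wt e)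
    (he : e ∈ π w) :
    π w = {e} := by
  have hue : u = (ends e).1 ∨ u = (ends e).2 := by
    rcases hends with h | h <;> simp [h]
  -- upper bound on u's bundle value
  have hsub : π u ⊆ Finset.univ.filter
      (fun b : E => b ≠ e ∧ (u = (ends b).1 ∨ u = (ends b).2)) := by
    intro b hb
    simp only [Finset.mem_filter, Finset.mem_univ, true_and]
    refine ⟨?_, hor u b hb⟩
    rintro rfl
    exact absurd ((hdisj u w huw).le_bot (Finset.mem_inter.mpr ⟨hb, he⟩)) (by simp)
  have hval : ∀ b ∈ π u, edgeVal ends wt u b = wt b := by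
    intro b hb; simp [edgeVal, hor u b hb]
  have hub : (∑ b ∈ π u, edgeVal ends wt u b) < wt e := by
    calc (∑ b ∈ π u, edgeVal ends wt u b) = ∑ b ∈ π u, wt b :=
          Finset.sum_congr rfl hval
      _ ≤ ∑ b ∈ Finset.univ.filter
            (fun b : E => b ≠ e ∧ (u = (ends b).1 ∨ u = (ends b).2)), wt b :=
          Finset.sum_le_sum_of_subset_of_nonneg hsub (fun b _ _ => (hwt b).le)
      _ < wt e := hheavy
  -- now show π w ⊆ {e}
  ext a
  simp only [Finset.mem_singleton]
  constructor
  · intro ha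
    by_contra hne
    have heer : e ∈ (π w).erase a := Finset.mem_erase.mpr ⟨Ne.symm hne, he⟩
    have hlb : wt e ≤ ∑ b ∈ (π w).erase a, edgeVal ends wt u b := by
      have := Finset.single_le_sum (f := edgeVal ends wt u)
        (fun b _ => by unfold edgeVal; split <;> [exact (hwt b).le; rfl]) heer
      simpa [edgeVal, hue] using this
    have := hefx u w a ha
    linarith
  · rintro rfl; exact he
end
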